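/- Let b, c, e, f be integers with be ≠ 0, bf ≠ ec, and e ∣ f. Then for every infinite set A of positive integers and every K, there exists a positive integer n with |d(A, bn+c) − d(A, en+f)| ≥ K; that is, limsup_{n→∞} |d(A, bn+c) − d(A, en+f)| = ∞. -/

import Mathlib

/-- `countDiv A m` is the number of elements `a ∈ A` with `a ∣ m`. -/
noncomputable def countDiv (A : Set ℕ) (m : ℤ) : ℕ := {a ∈ A | (a : ℤ) ∣ m}.ncard

/-!
Write `f = e * g` and `C = c - b * g`, which is nonzero since `b * f ≠ e * c`. Choose `K + M`
elements of `A`, where `M = 2 τ(|C|)`, let `L` be their lcm and take `n = L t - g`. Every chosen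
element divides `e * n + f = e L t`. On the other side `b * n + c = b L t + C = d (u t + v)` with
`d = gcd (b L) C` and `u`, `v` coprime, so by Dirichlet's theorem `t` can be taken so large that
`u t + v = ±p` is prime; then `b * n + c` has at most `2 τ(d) ≤ M` divisors.
-/

open Finset

lemma Nat.card_divisors_mul_le (m n : ℕ) : #(m * n).divisors ≤ #m.divisors * #n.divisors :=
  Nat.divisors_mul m n ▸ Finset.card_mul_le

lemma Nat.Prime.card_divisors {p : ℕ} (hp : p.Prime) : #p.divisors = 2 := by
  rw [hp.divisors, card_pair hp.one_lt.ne]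

lemma setOf_mem_and_dvd_subset_divisors (A : Set ℕ) {m : ℤ} (hm : m ≠ 0) :
    {a ∈ A | (a : ℤ) ∣ m} ⊆ m.natAbs.divisors := fun _ ⟨_, ha⟩ ↦
  Nat.mem_divisors.mpr ⟨Int.natCast_dvd.mp ha, Int.natAbs_ne_zero.mpr hm⟩

lemma countDiv_le_card_divisors (A : Set ℕ) {m : ℤ} (hm : m ≠ 0) :
    countDiv A m ≤ #m.natAbs.divisors := by
  rw [← Set.ncard_coe_finset]
  exact Set.ncard_le_ncard (setOf_mem_and_dvd_subset_divisors A hm) (finite_toSet _)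

lemma card_le_countDiv {A : Set ℕ} {B : Finset ℕ} {m : ℤ} (hm : m ≠ 0) (hBA : ↑B ⊆ A)
    (hBm : ∀ a ∈ B, (a : ℤ) ∣ m) : #B ≤ countDiv A m := by
  rw [← Set.ncard_coe_finset]
  exact Set.ncard_le_ncard (fun a ha ↦ ⟨hBA ha, hBm a ha⟩)
    ((finite_toSet _).subset (setOf_mem_and_dvd_subset_divisors A hm))

lemma Int.exists_lt_and_prime_natAbs_mul_add {u v : ℤ} (hu : u ≠ 0) (huv : IsCoprime u v)
    (T : ℤ) : ∃ t, T < t ∧ (u * t + v).natAbs.Prime := by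
  wlog hu_pos : 0 < u generalizing u v
  · obtain ⟨t, hTt, ht⟩ := this (neg_ne_zero.mpr hu) huv.neg_neg (by omega)
    exact ⟨t, hTt, by rwa [neg_mul, ← neg_add, Int.natAbs_neg] at ht⟩
  obtain ⟨p, hp_gt, hp, hpv⟩ := Nat.forall_exists_prime_gt_and_zmodEq (u * T + v).toNat
    (Int.natAbs_ne_zero.mpr hu) (by rw [Int.natCast_natAbs, IsCoprime.abs_right_iff]; exact huv.symm)
  obtain ⟨t, ht⟩ : u ∣ p - v := by
    simpa [Int.natCast_natAbs, abs_dvd] using (Int.ModEq.dvd hpv.symm)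
  refine ⟨t, ?_, by rw [← ht, sub_add_cancel, Int.natAbs_natCast]; exact hp⟩
  have : u * T < u * t := by omega
  exact lt_of_mul_lt_mul_left this hu_pos.le

lemma Int.exists_lt_and_card_divisors_natAbs_mul_add_le {a C : ℤ} (ha : a ≠ 0) (hC : C ≠ 0)
    (T : ℤ) : ∃ t, T < t ∧ a * t + C ≠ 0 ∧
      #(a * t + C).natAbs.divisors ≤ 2 * #C.natAbs.divisors := by
  obtain ⟨g, u, v, hg, huv, rfl, rfl⟩ := Int.exists_gcd_one' (Int.gcd_pos_of_ne_zero_left C ha)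
  have hu : u ≠ 0 := by rintro rfl; simp at ha
  obtain ⟨t, hTt, hp⟩ := Int.exists_lt_and_prime_natAbs_mul_add hu
    (Int.isCoprime_iff_gcd_eq_one.mpr huv) T
  have hfactor : (u * g * t + v * g).natAbs = g * (u * t + v).natAbs := by
    rw [show u * g * t + v * g = g * (u * t + v) by ring, Int.natAbs_mul, Int.natAbs_natCast]
  refine ⟨t, hTt, ?_, ?_⟩
  · rw [← Int.natAbs_ne_zero, hfactor]
    exact mul_ne_zero hg.ne' hp.ne_zero
  · calc #(u * g * t + v * g).natAbs.divisors
        ≤ #g.divisors * #(u * t + v).natAbs.divisors := hfactor ▸ Nat.card_divisors_mul_le _ _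
      _ = 2 * #g.divisors := by rw [hp.card_divisors, mul_comm]
      _ ≤ 2 * #(v * g).natAbs.divisors := by gcongr; simp [Int.natAbs_mul]

/-- Sufficiency of Case IV (symmetric version): if `be ≠ 0`, `bf ≠ ec` and `e ∣ f`,
then for every infinite set `A` of positive integers, `|d(A, bn+c) − d(A, en+f)|`
is unbounded. -/
theorem caseIV_sufficiency' (b c e f : ℤ) (hbe : b * e ≠ 0) (hbf : b * f ≠ e * c)
    (hef : e ∣ f) :
    ∀ A : Set ℕ, (∀ a ∈ A, 0 < a) → A.Infinite → ∀ K : ℕ, ∃ n : ℕ, 0 < n ∧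
      (K : ℤ) ≤ |(countDiv A (b * n + c) : ℤ) - (countDiv A (e * n + f) : ℤ)| := by
  intro A hA_pos hA_inf K
  obtain ⟨hb, he⟩ := mul_ne_zero_iff.mp hbe
  obtain ⟨g, rfl⟩ := hef
  have hC : c - b * g ≠ 0 := by
    contrapose! hbf
    linear_combination (-e) * hbf
  set M := 2 * #(c - b * g).natAbs.divisors
  obtain ⟨B, hBA, hB_card⟩ := hA_inf.exists_subset_card_eq (K + M)
  set L := B.lcm id
  have hL : L ≠ 0 := by
    simpa [L, Finset.lcm_eq_zero_iff] using fun h ↦ (hA_pos 0 (hBA h)).ne rfl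
  obtain ⟨t, hgt, hne, hτ⟩ := Int.exists_lt_and_card_divisors_natAbs_mul_add_le
    (mul_ne_zero hb (Int.natCast_ne_zero.mpr hL)) hC |g|
  have hg_lt : g < t := (le_abs_self g).trans_lt hgt
  have ht : 0 < t := (abs_nonneg g).trans_lt hgt
  have hLt : t ≤ L * t := le_mul_of_one_le_left ht.le (by omega)
  obtain ⟨n, hn⟩ : ∃ n : ℕ, (n : ℤ) = L * t - g := ⟨_, Int.toNat_of_nonneg (by omega)⟩
  have hX : countDiv A (b * n + c) ≤ M := by
    rw [hn, show b * (L * t - g) + c = b * L * t + (c - b * g) by ring]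
    exact (countDiv_le_card_divisors A hne).trans hτ
  have hY : K + M ≤ countDiv A (e * n + e * g) := by
    rw [hn, show e * (L * t - g) + e * g = e * L * t by ring, ← hB_card]
    refine card_le_countDiv
      (mul_ne_zero (mul_ne_zero he (Int.natCast_ne_zero.mpr hL)) ht.ne') hBA fun a ha ↦ ?_
    exact (Int.natCast_dvd_natCast.mpr (Finset.dvd_lcm ha)).mul_left e |>.mul_right t
  refine ⟨n, by omega, ?_⟩
  rw [abs_sub_comm]
  exact le_abs.mpr (Or.inl (by omega))
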